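/- Let ρ, σ ⪰ 0 be positive semidefinite matrices and Π an orthogonal projector commuting with ρ. Then F(ρ,σ) ≤ F(ΠρΠ, σ) + sqrt(Tr[(I-Π)ρ(I-Π)]) · sqrt(Tr[(I-Π)σ(I-Π)]), where F(ρ,σ) = ‖sqrt(ρ) sqrt(σ)‖₁ is the fidelity (trace norm of sqrt(ρ)sqrt(σ)). -/

import Mathlib

/-!
Since `Π` commutes with `ρ`, it commutes with `√ρ`, so `√(ΠρΠ) = Π√ρ` and
`√ρ √σ = √(ΠρΠ) √σ + (√ρ (1 - Π)) ((1 - Π) √σ)`.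
Both estimates needed for the trace norm `‖M‖₁ = Tr |M|` come from a polar decomposition
`M = W |M|` with `W* M = |M|` and `W* W ≤ 1`: it gives `Re Tr (C M) ≤ ‖M‖₁` for every
contraction `C` (Cauchy–Schwarz for the Hilbert–Schmidt inner product, after splitting
`|M| = √|M| √|M|`), whence the triangle inequality, and `‖X Y‖₁ = Re Tr (W* X Y) ≤ ‖X‖₂ ‖Y‖₂`.
-/

open Matrix ComplexOrder

attribute [local instance] Classical.propDecidable

/-- Square root of a positive semidefinite matrix (junk value `0` otherwise). -/
noncomputable def psqrt {d : ℕ} (X : Matrix (Fin d) (Fin d) ℂ) : Matrix (Fin d) (Fin d) ℂ :=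
  if h : X.PosSemidef then
    (h.1.eigenvectorUnitary : Matrix (Fin d) (Fin d) ℂ) *
      diagonal ((↑) ∘ Real.sqrt ∘ h.1.eigenvalues) *
      (star h.1.eigenvectorUnitary : Matrix (Fin d) (Fin d) ℂ)
  else 0

/-- Schatten 1-norm (trace norm): `‖M‖₁ = Tr √(Mᴴ M)`. -/
noncomputable def traceNorm {d : ℕ} (M : Matrix (Fin d) (Fin d) ℂ) : ℝ :=
  (psqrt (Mᴴ * M)).trace.re

/-- Fidelity `F(X, σ) = Tr √(√σ X √σ)` of positive semidefinite matrices. -/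
noncomputable def fid {d : ℕ} (X σ : Matrix (Fin d) (Fin d) ℂ) : ℝ :=
  (psqrt (psqrt σ * X * psqrt σ)).trace.re

open scoped MatrixOrder

namespace CFC

variable {A : Type*} [PartialOrder A] [NonUnitalRing A] [TopologicalSpace A] [StarRing A]
  [Module ℝ A] [SMulCommClass ℝ A A] [IsScalarTower ℝ A A] [StarOrderedRing A]
  [NonUnitalContinuousFunctionalCalculus ℝ A IsSelfAdjoint] [NonnegSpectrumClass ℝ A]
  [IsTopologicalRing A] [T2Space A]

lemma _root_.Commute.cfcSqrt_right {a b : A} (h : Commute a b) : Commute a (sqrt b) :=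
  (h.symm.cfcₙ_nnreal NNReal.sqrt).symm

lemma _root_.IsStarProjection.sqrt_mul_mul_self {p a : A} (hp : IsStarProjection p) (ha : 0 ≤ a)
    (hpa : Commute p a) : sqrt (p * a * p) = p * sqrt a := by
  have hc := hpa.cfcSqrt_right
  have hpsp : p * sqrt a * p = p * sqrt a := by
    rw [mul_assoc, ← hc.eq, ← mul_assoc, hp.isIdempotentElem.eq]
  refine sqrt_unique ?_ (hpsp ▸ hp.isSelfAdjoint.conjugate_nonneg (sqrt_nonneg a))
  calc p * sqrt a * (p * sqrt a) = p * (sqrt a * p) * sqrt a := by simp only [mul_assoc]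
    _ = p * p * (sqrt a * sqrt a) := by rw [← hc.eq]; simp only [mul_assoc]
    _ = p * a * p := by
      rw [hp.isIdempotentElem.eq, sqrt_mul_sqrt_self a ha, mul_assoc, ← hpa.eq, ← mul_assoc,
        hp.isIdempotentElem.eq]

end CFC

namespace Matrix

variable {m n 𝕜 : Type*} [Fintype m] [Fintype n] [RCLike 𝕜]

open RCLike

theorem norm_trace_conjTranspose_mul_le (A B : Matrix m n 𝕜) :
    ‖(Aᴴ * B).trace‖ ≤ √(re (Aᴴ * A).trace) * √(re (Bᴴ * B).trace) := by
  have inner_eq (A B : Matrix m n 𝕜) :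
      inner 𝕜 (WithLp.toLp 2 A.vec) (WithLp.toLp 2 B.vec) = (Aᴴ * B).trace := by
    rw [EuclideanSpace.inner_eq_star_dotProduct, dotProduct_comm, star_vec_dotProduct_vec]
  simpa only [inner_eq, norm_eq_sqrt_re_inner (𝕜 := 𝕜)] using
    norm_inner_le_norm (𝕜 := 𝕜) (WithLp.toLp 2 A.vec) (WithLp.toLp 2 B.vec)

theorem re_trace_mono {A B : Matrix n n 𝕜} (h : A ≤ B) : re A.trace ≤ re B.trace := by
  have := (RCLike.nonneg_iff.mp (le_iff.mp h).trace_nonneg).1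
  rwa [trace_sub, map_sub, sub_nonneg] at this

variable [DecidableEq n]

lemma cfc_mul_cfc (f g : ℝ → ℝ) (A : Matrix n n 𝕜) :
    cfc f A * cfc g A = cfc (fun t ↦ f t * g t) A :=
  (cfc_mul f g A (A.finite_real_spectrum.continuousOn f)
    (A.finite_real_spectrum.continuousOn g)).symm

/-- The partial isometry is `M * |M|⁺`, where the pseudo-inverse `|M|⁺` inverts `|M|` on its
range and vanishes on its kernel. -/
theorem exists_polar_decomposition (M : Matrix n n 𝕜) :
    ∃ W : Matrix n n 𝕜, W * CFC.abs M = M ∧ Wᴴ * M = CFC.abs M ∧ Wᴴ * W ≤ 1 := by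
  set S := CFC.abs M
  have hSS : S * S = Mᴴ * M := CFC.abs_mul_abs M
  have hSid : cfc (fun t : ℝ ↦ t) S = S := cfc_id' ℝ S (CFC.abs_nonneg M).isSelfAdjoint
  set R := cfc (fun t : ℝ ↦ t⁻¹) S
  have hR : Rᴴ = R := cfc_predicate (fun t : ℝ ↦ t⁻¹) S
  have hRSS : R * (S * S) = S := by
    have : cfc (fun t : ℝ ↦ t⁻¹ * (t * t)) S = cfc (fun t : ℝ ↦ t) S := by
      congr 1; funext t; rcases eq_or_ne t 0 with rfl | ht <;> field_simp
    rwa [← cfc_mul_cfc, ← cfc_mul_cfc, hSid] at this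
  have hSSR : S * S * R = S := by
    have : cfc (fun t : ℝ ↦ t * t * t⁻¹) S = cfc (fun t : ℝ ↦ t) S := by
      congr 1; funext t; rcases eq_or_ne t 0 with rfl | ht <;> field_simp
    rwa [← cfc_mul_cfc, ← cfc_mul_cfc, hSid] at this
  have hMRS : M * R * S = M := by
    have hker : (M * (1 - R * S))ᴴ * (M * (1 - R * S)) = 0 := by
      rw [conjTranspose_mul, mul_assoc, ← mul_assoc Mᴴ, ← hSS, mul_sub, mul_one,
        ← mul_assoc, hSSR, sub_self, mul_zero]
    rw [conjTranspose_mul_self_eq_zero, mul_sub, mul_one, sub_eq_zero] at hker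
    rw [mul_assoc, ← hker]
  refine ⟨M * R, hMRS, ?_, ?_⟩
  · rw [conjTranspose_mul, hR, mul_assoc, ← hSS, hRSS]
  · rw [conjTranspose_mul, hR, mul_assoc, ← mul_assoc Mᴴ, ← hSS, hSSR,
      show R * S = cfc (fun t : ℝ ↦ t⁻¹ * t) S by rw [← cfc_mul_cfc, hSid]]
    refine cfc_le_one _ _ fun t _ ↦ ?_
    rcases eq_or_ne t 0 with rfl | ht
    · simp
    · rw [inv_mul_cancel₀ ht]

theorem re_trace_mul_le_re_trace_abs {C : Matrix n n 𝕜} (hC : C * Cᴴ ≤ 1) (M : Matrix n n 𝕜) :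
    re (C * M).trace ≤ re (CFC.abs M).trace := by
  obtain ⟨W, hWM, -, hW⟩ := exists_polar_decomposition M
  set S := CFC.abs M
  set T := CFC.sqrt S
  have hT : Tᴴ = T := (CFC.sqrt_nonneg S).isSelfAdjoint
  have hTT : T * T = S := CFC.sqrt_mul_sqrt_self S (CFC.abs_nonneg M)
  have hCT : re ((Cᴴ * T)ᴴ * (Cᴴ * T)).trace ≤ re S.trace := by
    simpa only [star_eq_conjTranspose, conjTranspose_mul, conjTranspose_conjTranspose, hT,
      mul_assoc, one_mul, hTT]
      using re_trace_mono (star_left_conjugate_le_conjugate hC T)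
  have hWT : re ((W * T)ᴴ * (W * T)).trace ≤ re S.trace := by
    simpa only [star_eq_conjTranspose, conjTranspose_mul, hT, mul_assoc, one_mul, hTT]
      using re_trace_mono (star_left_conjugate_le_conjugate hW T)
  have htrace : (C * M).trace = ((Cᴴ * T)ᴴ * (W * T)).trace := by
    rw [← hWM, ← hTT, conjTranspose_mul, conjTranspose_conjTranspose, hT]
    simp only [← mul_assoc]
    rw [trace_mul_comm]
    simp only [mul_assoc]
  calc re (C * M).trace ≤ ‖(C * M).trace‖ := re_le_norm _
    _ ≤ √(re S.trace) * √(re S.trace) := by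
      rw [htrace]
      exact (norm_trace_conjTranspose_mul_le _ _).trans <| mul_le_mul (Real.sqrt_le_sqrt hCT)
        (Real.sqrt_le_sqrt hWT) (Real.sqrt_nonneg _) (Real.sqrt_nonneg _)
    _ = re S.trace := Real.mul_self_sqrt (by simpa using re_trace_mono (CFC.abs_nonneg M))

theorem re_trace_abs_add_le (A B : Matrix n n 𝕜) :
    re (CFC.abs (A + B)).trace ≤ re (CFC.abs A).trace + re (CFC.abs B).trace := by
  obtain ⟨W, -, hW, hWW⟩ := exists_polar_decomposition (A + B)
  have hWc : Wᴴ * Wᴴᴴ ≤ 1 := by rwa [conjTranspose_conjTranspose]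
  rw [← hW, mul_add, trace_add, map_add]
  exact add_le_add (re_trace_mul_le_re_trace_abs hWc A) (re_trace_mul_le_re_trace_abs hWc B)

theorem re_trace_abs_mul_le (X Y : Matrix n n 𝕜) :
    re (CFC.abs (X * Y)).trace ≤ √(re (Xᴴ * X).trace) * √(re (Y * Yᴴ).trace) := by
  obtain ⟨W, -, hW, hWW⟩ := exists_polar_decomposition (X * Y)
  have htrace : (Wᴴ * (X * Y)).trace = (Xᴴᴴ * (Y * Wᴴ)).trace := by
    rw [conjTranspose_conjTranspose, trace_mul_comm, mul_assoc]
  have hX : (Xᴴᴴ * Xᴴ).trace = (Xᴴ * X).trace := by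
    rw [conjTranspose_conjTranspose, trace_mul_comm]
  have hY : re ((Y * Wᴴ)ᴴ * (Y * Wᴴ)).trace ≤ re (Y * Yᴴ).trace := by
    have := re_trace_mono (star_left_conjugate_le_conjugate hWW Yᴴ)
    rw [star_eq_conjTranspose, conjTranspose_conjTranspose, mul_one] at this
    rw [conjTranspose_mul, conjTranspose_conjTranspose, trace_mul_comm]
    simpa only [mul_assoc] using this
  calc re (CFC.abs (X * Y)).trace ≤ ‖(Xᴴᴴ * (Y * Wᴴ)).trace‖ := by
        rw [← hW, htrace]; exact re_le_norm _
    _ ≤ _ := norm_trace_conjTranspose_mul_le _ _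
    _ ≤ _ := by rw [hX]; gcongr

end Matrix

lemma psqrt_eq_sqrt {d : ℕ} {X : Matrix (Fin d) (Fin d) ℂ} (h : X.PosSemidef) :
    psqrt X = CFC.sqrt X := by
  rw [CFC.sqrt_eq_real_sqrt X h.nonneg, cfcₙ_eq_cfc, h.1.cfc_eq, psqrt, dif_pos h]
  rfl

lemma traceNorm_eq_re_trace_abs {d : ℕ} (M : Matrix (Fin d) (Fin d) ℂ) :
    traceNorm M = (CFC.abs M).trace.re := by
  rw [traceNorm, psqrt_eq_sqrt (posSemidef_conjTranspose_mul_self M)]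
  rfl

theorem hard_truncation_bound {d : ℕ} (ρ σ P : Matrix (Fin d) (Fin d) ℂ)
    (hρ : ρ.PosSemidef) (hσ : σ.PosSemidef)
    (hPherm : Pᴴ = P) (hPproj : P * P = P) (hPρ : P * ρ = ρ * P) :
    traceNorm (psqrt ρ * psqrt σ) ≤ traceNorm (psqrt (P * ρ * P) * psqrt σ)
      + Real.sqrt (((1 - P) * ρ * (1 - P)).trace.re)
        * Real.sqrt (((1 - P) * σ * (1 - P)).trace.re) := by
  have hP : IsStarProjection P := ⟨hPproj, hPherm⟩
  have hPρP : (P * ρ * P).PosSemidef := by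
    simpa only [hPherm] using hρ.mul_mul_conjTranspose_same P
  rw [psqrt_eq_sqrt hρ, psqrt_eq_sqrt hσ, psqrt_eq_sqrt hPρP,
    hP.sqrt_mul_mul_self hρ.nonneg hPρ, traceNorm_eq_re_trace_abs, traceNorm_eq_re_trace_abs]
  set S := CFC.sqrt ρ
  set T := CFC.sqrt σ
  have hPS : Commute P S := Commute.cfcSqrt_right hPρ
  have hS : Sᴴ = S := (CFC.sqrt_nonneg ρ).isSelfAdjoint
  have hT : Tᴴ = T := (CFC.sqrt_nonneg σ).isSelfAdjoint
  have hQ : (1 - P)ᴴ = 1 - P := hP.one_sub.isSelfAdjoint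
  have hQQ : (1 - P) * (1 - P) = 1 - P := hP.one_sub.isIdempotentElem
  have hdecomp : S * T = P * S * T + S * (1 - P) * ((1 - P) * T) := by
    rw [mul_assoc S, ← mul_assoc (1 - P), hQQ, sub_mul, one_mul, mul_sub, ← mul_assoc S P,
      ← hPS.eq]
    abel
  have hρQ : (S * (1 - P))ᴴ * (S * (1 - P)) = (1 - P) * ρ * (1 - P) := by
    rw [conjTranspose_mul, hQ, hS, mul_assoc, ← mul_assoc S, CFC.sqrt_mul_sqrt_self ρ hρ.nonneg,
      mul_assoc]
  have hσQ : (1 - P) * T * ((1 - P) * T)ᴴ = (1 - P) * σ * (1 - P) := by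
    rw [conjTranspose_mul, hQ, hT, mul_assoc, ← mul_assoc T, CFC.sqrt_mul_sqrt_self σ hσ.nonneg,
      mul_assoc]
  calc (CFC.abs (S * T)).trace.re
      ≤ (CFC.abs (P * S * T)).trace.re + (CFC.abs (S * (1 - P) * ((1 - P) * T))).trace.re := by
        rw [hdecomp]
        exact re_trace_abs_add_le (P * S * T) (S * (1 - P) * ((1 - P) * T))
    _ ≤ _ := by
        gcongr
        exact (re_trace_abs_mul_le (S * (1 - P)) ((1 - P) * T)).trans_eq (by rw [hρQ, hσQ])
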